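/- In the Metropolis-within-Gibbs setting, define ϱ := inf over f ∈ L²(X,π_X) with ∫_Θ var_{ξ(θ,·)}(f) π_Θ(dθ) > 0 of the ratio [∫_Θ var_{ξ(θ,·)}(f) Gap(Π_θ) π_Θ(dθ)] / [∫_Θ var_{ξ(θ,·)}(f) π_Θ(dθ)]. Then for every f ∈ L²(X,π_X) the Dirichlet forms satisfy 2 E_{Γ_x}(f) ≥ E_{Φ_x}(f) ≥ ϱ · E_{Γ_x}(f), and the right spectral gaps satisfy 2 Gap(Γ_x) ≥ Gap(Φ_x) ≥ ϱ · Gap(Γ_x). -/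

import Mathlib

/-!
For a Markov kernel `K` leaving `μ` invariant and `f ∈ L²(μ)`,
`2 E_K(f) = ∫∫ (f x - f y)² K(x, dy) μ(dx)`; in particular `0 ≤ E_K(f) ≤ 2 var_μ(f)`.
Realise `Φ_x` as the kernel `x ↦ ∫ Π_θ(x, ·) η(x, dθ)`. The two disintegrations of `π` identify
`π_X ⊗ Φ_x` with the `X × X`-marginal of `π_Θ ⊗ (ξ ⊗ Π)`, so `Φ_x` is `π_X`-invariant and
`E_{Φ_x}(f) = ∫ E_{Π_θ}(f) π_Θ(dθ)`. Taking `Π_θ(x, ·) = ξ(θ, ·)` gives `Γ_x` and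
`E_{Γ_x}(f) = ∫ var_{ξ(θ,·)}(f) π_Θ(dθ)`. The Dirichlet form bounds then hold pointwise in `θ`,
by `E_{Π_θ} ≤ 2 var` and `Gap(Π_θ) var ≤ E_{Π_θ}`, and the gap bounds follow by taking infima.
-/


open MeasureTheory ProbabilityTheory
open scoped ENNReal

/-- The Dirichlet form `E_K(f) = ∫ f (f - Kf) dμ` of a Markov transition `K`. -/
noncomputable def dform {α : Type*} [MeasurableSpace α]
    (μ : Measure α) (K : α → Measure α) (f : α → ℝ) : ℝ :=
  ∫ x, f x * (f x - ∫ y, f y ∂(K x)) ∂μ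

/-- The variance of `f` under `μ`: `var_μ(f) = μ(f²) - μ(f)²`. -/
noncomputable def varF {α : Type*} [MeasurableSpace α] (μ : Measure α) (f : α → ℝ) : ℝ :=
  (∫ x, f x ^ 2 ∂μ) - (∫ x, f x ∂μ) ^ 2

/-- The right spectral gap `Gap(K) = inf {E_K(f)/var_μ(f) : f ∈ L²(μ), var_μ(f) > 0}`. -/
noncomputable def gapR {α : Type*} [MeasurableSpace α]
    (μ : Measure α) (K : α → Measure α) : ℝ :=
  sInf {r : ℝ | ∃ f : α → ℝ, MemLp f 2 μ ∧ 0 < varF μ f ∧ r = dform μ K f / varF μ f}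

variable {Θ X : Type*} [MeasurableSpace Θ] [MeasurableSpace X]

/-- The `X`-marginal Metropolis-within-Gibbs kernel
`Φ_x(x₀, S) = ∫_Θ Π_θ(x₀, S) η(x₀, dθ)`. -/
noncomputable def PhiX (η : Kernel X Θ) (Pk : Kernel (Θ × X) X) (x₀ : X) : Measure X :=
  (η x₀).bind (fun θ => Pk (θ, x₀))

/-- The `X`-marginal Gibbs kernel `Γ_x(x₀, S) = ∫_Θ ξ(θ, S) η(x₀, dθ)`. -/
noncomputable def GammaX (η : Kernel X Θ) (ξ : Kernel Θ X) (x₀ : X) : Measure X :=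
  (η x₀).bind (fun θ => ξ θ)

/-- The constant `ϱ`, an infimum over `f ∈ L²(X, π_X)` of the ratio
`∫ var_{ξ(θ,·)}(f) Gap(Π_θ) π_Θ(dθ) / ∫ var_{ξ(θ,·)}(f) π_Θ(dθ)`. -/
noncomputable def mwgRho (π : Measure (Θ × X)) (ξ : Kernel Θ X)
    (Pk : Kernel (Θ × X) X) : ℝ :=
  sInf {r : ℝ | ∃ f : X → ℝ, MemLp f 2 π.snd ∧
    0 < (∫ θ, varF (ξ θ) f ∂π.fst) ∧
    r = (∫ θ, varF (ξ θ) f * gapR (ξ θ) (fun x => Pk (θ, x)) ∂π.fst) /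
        (∫ θ, varF (ξ θ) f ∂π.fst)}

lemma varF_eq_variance {α : Type*} [MeasurableSpace α] {μ : Measure α} [IsProbabilityMeasure μ]
    {f : α → ℝ} (hf : MemLp f 2 μ) : varF μ f = variance f μ := by
  rw [variance_eq_sub hf, varF]; rfl

lemma varF_nonneg {α : Type*} [MeasurableSpace α] {μ : Measure α} [IsProbabilityMeasure μ]
    {f : α → ℝ} (hf : MemLp f 2 μ) : 0 ≤ varF μ f := by
  rw [varF_eq_variance hf]; exact variance_nonneg f μ

lemma integral_comp_fst_compProd {α β : Type*} [MeasurableSpace α] [MeasurableSpace β]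
    {μ : Measure α} [SFinite μ] {κ : Kernel α β} [IsMarkovKernel κ] {g : α → ℝ}
    (hg : AEStronglyMeasurable g μ) : ∫ p, g p.1 ∂(μ ⊗ₘ κ) = ∫ x, g x ∂μ := by
  calc ∫ p, g p.1 ∂(μ ⊗ₘ κ) = ∫ x, g x ∂(μ ⊗ₘ κ).fst :=
        (integral_map measurable_fst.aemeasurable
          (by rwa [← Measure.fst, Measure.fst_compProd])).symm
    _ = ∫ x, g x ∂μ := by rw [Measure.fst_compProd]

lemma memLp_comp_fst_compProd {α β : Type*} [MeasurableSpace α] [MeasurableSpace β]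
    {μ : Measure α} [SFinite μ] {κ : Kernel α β} [IsMarkovKernel κ] {g : α → ℝ}
    (hg : MemLp g 2 μ) : MemLp (fun p => g p.1) 2 (μ ⊗ₘ κ) :=
  (Measure.fst_compProd μ κ ▸ hg).comp_of_map measurable_fst.aemeasurable

section InvariantKernel

variable {α : Type*} [MeasurableSpace α] {μ : Measure α} [IsProbabilityMeasure μ]
  {K : Kernel α α} [IsMarkovKernel K] {f : α → ℝ}

namespace ProbabilityTheory.Kernel.Invariant

lemma snd_compProd (hK : K.Invariant μ) : (μ ⊗ₘ K).snd = μ := by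
  rw [Measure.snd_compProd]; exact hK

lemma integral_comp_snd_compProd (hK : K.Invariant μ) {g : α → ℝ}
    (hg : AEStronglyMeasurable g μ) : ∫ p, g p.2 ∂(μ ⊗ₘ K) = ∫ x, g x ∂μ := by
  calc ∫ p, g p.2 ∂(μ ⊗ₘ K) = ∫ x, g x ∂(μ ⊗ₘ K).snd :=
        (integral_map measurable_snd.aemeasurable
          (by rwa [← Measure.snd, hK.snd_compProd])).symm
    _ = ∫ x, g x ∂μ := by rw [hK.snd_compProd]

lemma memLp_comp_snd_compProd (hK : K.Invariant μ) {g : α → ℝ} (hg : MemLp g 2 μ) :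
    MemLp (fun p => g p.2) 2 (μ ⊗ₘ K) :=
  (hK.snd_compProd ▸ hg).comp_of_map measurable_snd.aemeasurable

lemma integral_sq_sub_eq_two_mul_dform (hK : K.Invariant μ) (hf : MemLp f 2 μ) :
    ∫ p, (f p.1 - f p.2) ^ 2 ∂(μ ⊗ₘ K) = 2 * dform μ K f := by
  have hfst := memLp_comp_fst_compProd (κ := K) hf
  have hsnd := hK.memLp_comp_snd_compProd hf
  have hprod : Integrable (fun p : α × α => f p.1 * f p.2) (μ ⊗ₘ K) := hfst.integrable_mul hsnd
  have hcross : ∫ p, f p.1 * f p.2 ∂(μ ⊗ₘ K) = ∫ x, f x * ∫ y, f y ∂K x ∂μ := by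
    rw [Measure.integral_compProd hprod]
    simp_rw [integral_const_mul]
  have hKf : Integrable (fun x => f x * ∫ y, f y ∂K x) μ := by
    have h : Integrable (fun x => ∫ y, f x * f y ∂K x) μ := hprod.integral_compProd
    simpa only [integral_const_mul] using h
  have hsq := hf.integrable_sq.aestronglyMeasurable
  calc ∫ p, (f p.1 - f p.2) ^ 2 ∂(μ ⊗ₘ K)
      = ∫ p, (f p.1 ^ 2 + f p.2 ^ 2 - 2 * (f p.1 * f p.2)) ∂(μ ⊗ₘ K) := by
        congr 1; ext p; ring
    _ = 2 * ((∫ x, f x ^ 2 ∂μ) - ∫ x, f x * ∫ y, f y ∂K x ∂μ) := by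
        rw [integral_sub (f := fun p => f p.1 ^ 2 + f p.2 ^ 2)
          (hfst.integrable_sq.add hsnd.integrable_sq) (hprod.const_mul 2),
          integral_add hfst.integrable_sq hsnd.integrable_sq, integral_const_mul,
          integral_comp_fst_compProd hsq, hK.integral_comp_snd_compProd hsq, hcross]
        ring
    _ = 2 * dform μ K f := by
        rw [dform, ← integral_sub hf.integrable_sq hKf]
        congr 2; ext x; ring

lemma dform_nonneg (hK : K.Invariant μ) (hf : MemLp f 2 μ) : 0 ≤ dform μ K f := by
  have h := hK.integral_sq_sub_eq_two_mul_dform hf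
  have : 0 ≤ ∫ p, (f p.1 - f p.2) ^ 2 ∂(μ ⊗ₘ K) := integral_nonneg fun p => sq_nonneg _
  linarith

lemma dform_le_two_mul_varF (hK : K.Invariant μ) (hf : MemLp f 2 μ) :
    dform μ K f ≤ 2 * varF μ f := by
  set c := ∫ x, f x ∂μ
  have hg : MemLp (fun x => f x - c) 2 μ := hf.sub (memLp_const c)
  have hgsq := hg.integrable_sq
  have hfst := (memLp_comp_fst_compProd (κ := K) hg).integrable_sq.const_mul 2
  have hsnd := (hK.memLp_comp_snd_compProd hg).integrable_sq.const_mul 2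
  have hvar : ∫ x, (f x - c) ^ 2 ∂μ = varF μ f := by
    rw [varF_eq_variance hf, variance_eq_integral hf.aemeasurable]
  have hbound : ∫ p, (f p.1 - f p.2) ^ 2 ∂(μ ⊗ₘ K)
      ≤ ∫ p, (2 * (f p.1 - c) ^ 2 + 2 * (f p.2 - c) ^ 2) ∂(μ ⊗ₘ K) := by
    refine integral_mono_of_nonneg (ae_of_all _ fun p => sq_nonneg _) ?_
      (ae_of_all _ fun p => by nlinarith [sq_nonneg (f p.1 + f p.2 - 2 * c)])
    exact hfst.add hsnd
  rw [integral_add hfst hsnd, integral_const_mul, integral_const_mul,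
    integral_comp_fst_compProd hgsq.aestronglyMeasurable,
    hK.integral_comp_snd_compProd hgsq.aestronglyMeasurable, hvar,
    hK.integral_sq_sub_eq_two_mul_dform hf] at hbound
  linarith

end ProbabilityTheory.Kernel.Invariant

end InvariantKernel

section SpectralGap

variable {α : Type*} [MeasurableSpace α] {μ : Measure α} {f : α → ℝ}

lemma gapR_mul_varF_le_dform [IsProbabilityMeasure μ] {K : α → Measure α}
    (hK : ∀ g, MemLp g 2 μ → 0 ≤ dform μ K g) (hf : MemLp f 2 μ) :
    gapR μ K * varF μ f ≤ dform μ K f := by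
  rcases (varF_nonneg hf).eq_or_lt with hv | hv
  · rw [← hv, mul_zero]; exact hK f hf
  · rw [← le_div_iff₀ hv]
    refine csInf_le ⟨0, ?_⟩ ⟨f, hf, hv, rfl⟩
    rintro _ ⟨g, hg, hgv, rfl⟩
    exact div_nonneg (hK g hg) hgv.le

lemma gapR_nonneg {K : α → Measure α} (hK : ∀ g, MemLp g 2 μ → 0 ≤ dform μ K g) :
    0 ≤ gapR μ K := by
  refine Real.sInf_nonneg ?_
  rintro _ ⟨g, hg, hgv, rfl⟩
  exact div_nonneg (hK g hg) hgv.le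

lemma mul_gapR_le_gapR [IsProbabilityMeasure μ] {K₁ K₂ : α → Measure α} {c : ℝ} (hc : 0 ≤ c)
    (hK₂ : ∀ g, MemLp g 2 μ → 0 ≤ dform μ K₂ g)
    (h : ∀ g, MemLp g 2 μ → c * dform μ K₂ g ≤ dform μ K₁ g) :
    c * gapR μ K₂ ≤ gapR μ K₁ := by
  by_cases hI : ∃ g, MemLp g 2 μ ∧ 0 < varF μ g
  · obtain ⟨g, hg, hgv⟩ := hI
    refine le_csInf ⟨_, g, hg, hgv, rfl⟩ ?_
    rintro _ ⟨g, hg, hgv, rfl⟩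
    rw [le_div_iff₀ hgv, mul_assoc]
    exact (mul_le_mul_of_nonneg_left (gapR_mul_varF_le_dform hK₂ hg) hc).trans (h g hg)
  · have hempty : ∀ K : α → Measure α, gapR μ K = 0 := fun K => by
      rw [gapR, Set.eq_empty_of_forall_notMem (s := {r | _}), Real.sInf_empty]
      rintro _ ⟨g, hg, hgv, -⟩
      exact hI ⟨g, hg, hgv⟩
    rw [hempty, hempty, mul_zero]

end SpectralGap

lemma ae_memLp_of_comp_eq {α β : Type*} [MeasurableSpace α] [MeasurableSpace β]
    {μ : Measure α} {ν : Measure β} {κ : Kernel α β} (hκ : κ ∘ₘ μ = ν) {g : β → ℝ}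
    (hg : MemLp g 2 ν) : ∀ᵐ a ∂μ, MemLp g 2 (κ a) := by
  subst hκ
  obtain ⟨g', hg', hgg'⟩ := hg.aestronglyMeasurable
  filter_upwards [Measure.ae_ae_of_ae_comp hgg',
    Measure.ae_integrable_of_integrable_comp hg.integrable_sq] with a hae hint
  have hae' : g =ᵐ[κ a] g' := hae
  exact (memLp_two_iff_integrable_sq (hg'.aestronglyMeasurable.congr hae'.symm)).2 hint

lemma dform_const_eq_varF {α : Type*} [MeasurableSpace α] {ν : Measure α}
    [IsProbabilityMeasure ν] {f : α → ℝ} (hf : MemLp f 2 ν) :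
    dform ν (fun _ => ν) f = varF ν f := by
  have hmean := (hf.integrable one_le_two).mul_const (∫ y, f y ∂ν)
  calc dform ν (fun _ => ν) f = ∫ x, (f x ^ 2 - f x * ∫ y, f y ∂ν) ∂ν := by
        rw [dform]; congr 1; ext x; ring
    _ = varF ν f := by
        rw [integral_sub hf.integrable_sq hmean, integral_mul_const, varF]; ring

noncomputable def mwgKernel (η : Kernel X Θ) (Pk : Kernel (Θ × X) X) : Kernel X X :=
  Kernel.snd (η ⊗ₖ Pk.comap Prod.swap measurable_swap)

lemma coe_mwgKernel (η : Kernel X Θ) [IsSFiniteKernel η] (Pk : Kernel (Θ × X) X)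
    [IsSFiniteKernel Pk] : ⇑(mwgKernel η Pk) = PhiX η Pk := by
  ext1 x
  rw [mwgKernel, Kernel.snd_apply, Kernel.compProd_apply_eq_compProd_sectR, ← Measure.snd,
    Measure.snd_compProd]
  rfl

instance (η : Kernel X Θ) [IsMarkovKernel η] (Pk : Kernel (Θ × X) X) [IsMarkovKernel Pk] :
    IsMarkovKernel (mwgKernel η Pk) := by
  rw [mwgKernel]; infer_instance

lemma coe_mwgKernel_prodMkRight (η : Kernel X Θ) [IsSFiniteKernel η] (ξ : Kernel Θ X)
    [IsSFiniteKernel ξ] : ⇑(mwgKernel η (Kernel.prodMkRight X ξ)) = GammaX η ξ := by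
  rw [coe_mwgKernel]; rfl

section MetropolisWithinGibbs

variable {μΘ : Measure Θ} [IsProbabilityMeasure μΘ] {μX : Measure X} [IsProbabilityMeasure μX]
  {ξ : Kernel Θ X} [IsMarkovKernel ξ] {η : Kernel X Θ} [IsMarkovKernel η]
  {Pk : Kernel (Θ × X) X} [IsMarkovKernel Pk]

lemma comp_eq_of_map_swap_compProd_eq (hπ : (μX ⊗ₘ η).map Prod.swap = μΘ ⊗ₘ ξ) :
    ξ ∘ₘ μΘ = μX := by
  rw [← Measure.snd_compProd, ← hπ, Measure.snd_map_swap, Measure.fst_compProd]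

lemma compProd_mwgKernel (hπ : (μX ⊗ₘ η).map Prod.swap = μΘ ⊗ₘ ξ) :
    μX ⊗ₘ mwgKernel η Pk = (μΘ ⊗ₘ (ξ ⊗ₖ Pk)).snd := by
  ext S hS
  have hG : Measurable fun q : Θ × X => Pk q (Prod.mk q.2 ⁻¹' S) :=
    Kernel.measurable_kernel_prodMk_left (t := {p : (Θ × X) × X | (p.1.2, p.2) ∈ S})
      (hS.preimage (by fun_prop))
  calc (μX ⊗ₘ mwgKernel η Pk) S = ∫⁻ x, ∫⁻ θ, Pk (θ, x) (Prod.mk x ⁻¹' S) ∂η x ∂μX := by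
        rw [Measure.compProd_apply hS]
        refine lintegral_congr fun x => ?_
        rw [coe_mwgKernel, PhiX, Measure.bind_apply (f := fun θ => Pk (θ, x))
          (measurable_prodMk_left hS) (Pk.measurable.comp measurable_prodMk_right).aemeasurable]
    _ = ∫⁻ q, Pk q (Prod.mk q.2 ⁻¹' S) ∂((μX ⊗ₘ η).map Prod.swap) := by
        rw [lintegral_map hG measurable_swap]
        exact (Measure.lintegral_compProd (hG.comp measurable_swap)).symm
    _ = ∫⁻ θ, ∫⁻ x, Pk (θ, x) (Prod.mk x ⁻¹' S) ∂ξ θ ∂μΘ := by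
        rw [hπ, Measure.lintegral_compProd hG]
    _ = (μΘ ⊗ₘ (ξ ⊗ₖ Pk)).snd S := by
        rw [Measure.snd_apply hS, Measure.compProd_apply (measurable_snd hS)]
        refine lintegral_congr fun θ => ?_
        rw [← Kernel.compProd_apply hS]
        rfl

lemma invariant_mwgKernel (hπ : (μX ⊗ₘ η).map Prod.swap = μΘ ⊗ₘ ξ)
    (hinv : ∀ θ, (Pk.sectR θ).Invariant (ξ θ)) : (mwgKernel η Pk).Invariant μX := by
  have hsnd : (ξ ⊗ₖ Pk).map Prod.snd = ξ := by
    ext1 θ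
    rw [Kernel.map_apply _ measurable_snd, Kernel.compProd_apply_eq_compProd_sectR, ← Measure.snd,
      Measure.snd_compProd]
    exact hinv θ
  rw [Kernel.Invariant, ← Measure.snd_compProd, compProd_mwgKernel hπ, Measure.snd_compProd,
    Measure.snd, Measure.map_comp _ _ measurable_snd, hsnd, comp_eq_of_map_swap_compProd_eq hπ]

variable {f : X → ℝ}

lemma integrable_sq_sub_snd_compProd (hπ : (μX ⊗ₘ η).map Prod.swap = μΘ ⊗ₘ ξ)
    (hinv : ∀ θ, (Pk.sectR θ).Invariant (ξ θ)) (hf : MemLp f 2 μX) :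
    Integrable (fun p : X × X => (f p.1 - f p.2) ^ 2) (μΘ ⊗ₘ (ξ ⊗ₖ Pk)).snd := by
  rw [← compProd_mwgKernel hπ]
  exact ((memLp_comp_fst_compProd hf).sub
    ((invariant_mwgKernel hπ hinv).memLp_comp_snd_compProd hf)).integrable_sq

lemma ae_two_mul_dform_sectR (hπ : (μX ⊗ₘ η).map Prod.swap = μΘ ⊗ₘ ξ)
    (hinv : ∀ θ, (Pk.sectR θ).Invariant (ξ θ)) (hf : MemLp f 2 μX) :
    ∀ᵐ θ ∂μΘ, 2 * dform (ξ θ) (Pk.sectR θ) f = ∫ p, (f p.1 - f p.2) ^ 2 ∂(ξ ⊗ₖ Pk) θ := by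
  filter_upwards [ae_memLp_of_comp_eq (comp_eq_of_map_swap_compProd_eq hπ) hf] with θ hθ
  rw [Kernel.compProd_apply_eq_compProd_sectR, (hinv θ).integral_sq_sub_eq_two_mul_dform hθ]

lemma integrable_dform_sectR (hπ : (μX ⊗ₘ η).map Prod.swap = μΘ ⊗ₘ ξ)
    (hinv : ∀ θ, (Pk.sectR θ).Invariant (ξ θ)) (hf : MemLp f 2 μX) :
    Integrable (fun θ => dform (ξ θ) (Pk.sectR θ) f) μΘ := by
  have h : Integrable (fun θ => ∫ p, (f p.1 - f p.2) ^ 2 ∂(ξ ⊗ₖ Pk) θ) μΘ :=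
    ((integrable_sq_sub_snd_compProd hπ hinv hf).comp_measurable
      measurable_snd).integral_compProd
  refine (h.div_const 2).congr ?_
  filter_upwards [ae_two_mul_dform_sectR hπ hinv hf] with θ hθ
  rw [← hθ]; ring

lemma dform_mwgKernel_eq_integral (hπ : (μX ⊗ₘ η).map Prod.swap = μΘ ⊗ₘ ξ)
    (hinv : ∀ θ, (Pk.sectR θ).Invariant (ξ θ)) (hf : MemLp f 2 μX) :
    dform μX (mwgKernel η Pk) f = ∫ θ, dform (ξ θ) (Pk.sectR θ) f ∂μΘ := by
  have h := integrable_sq_sub_snd_compProd hπ hinv hf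
  suffices 2 * dform μX (mwgKernel η Pk) f = 2 * ∫ θ, dform (ξ θ) (Pk.sectR θ) f ∂μΘ by
    linarith
  calc 2 * dform μX (mwgKernel η Pk) f
      = ∫ p, (f p.1 - f p.2) ^ 2 ∂(μΘ ⊗ₘ (ξ ⊗ₖ Pk)).snd := by
        rw [← compProd_mwgKernel hπ,
          (invariant_mwgKernel hπ hinv).integral_sq_sub_eq_two_mul_dform hf]
    _ = ∫ θ, ∫ p, (f p.1 - f p.2) ^ 2 ∂(ξ ⊗ₖ Pk) θ ∂μΘ := by
        rw [Measure.snd, integral_map measurable_snd.aemeasurable h.aestronglyMeasurable]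
        exact Measure.integral_compProd (h.comp_measurable measurable_snd)
    _ = 2 * ∫ θ, dform (ξ θ) (Pk.sectR θ) f ∂μΘ := by
        rw [← integral_const_mul]
        exact integral_congr_ae ((ae_two_mul_dform_sectR hπ hinv hf).mono fun θ h => h.symm)

lemma invariant_sectR_prodMkRight (θ : Θ) :
    ((Kernel.prodMkRight X ξ).sectR θ).Invariant (ξ θ) := by
  change (ξ θ).bind (fun _ => ξ θ) = ξ θ
  rw [Measure.bind_const, measure_univ, one_smul]

lemma integrable_varF (hπ : (μX ⊗ₘ η).map Prod.swap = μΘ ⊗ₘ ξ) (hf : MemLp f 2 μX) :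
    Integrable (fun θ => varF (ξ θ) f) μΘ := by
  refine (integrable_dform_sectR hπ invariant_sectR_prodMkRight hf).congr ?_
  filter_upwards [ae_memLp_of_comp_eq (comp_eq_of_map_swap_compProd_eq hπ) hf] with θ hθ
  exact dform_const_eq_varF hθ

lemma dform_gammaX_eq_integral_varF (hπ : (μX ⊗ₘ η).map Prod.swap = μΘ ⊗ₘ ξ)
    (hf : MemLp f 2 μX) : dform μX (GammaX η ξ) f = ∫ θ, varF (ξ θ) f ∂μΘ := by
  rw [← coe_mwgKernel_prodMkRight, dform_mwgKernel_eq_integral hπ invariant_sectR_prodMkRight hf]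
  refine integral_congr_ae ?_
  filter_upwards [ae_memLp_of_comp_eq (comp_eq_of_map_swap_compProd_eq hπ) hf] with θ hθ
  exact dform_const_eq_varF hθ

lemma dform_mwgKernel_le_two_mul_dform_gammaX (hπ : (μX ⊗ₘ η).map Prod.swap = μΘ ⊗ₘ ξ)
    (hinv : ∀ θ, (Pk.sectR θ).Invariant (ξ θ)) (hf : MemLp f 2 μX) :
    dform μX (mwgKernel η Pk) f ≤ 2 * dform μX (GammaX η ξ) f := by
  rw [dform_mwgKernel_eq_integral hπ hinv hf, dform_gammaX_eq_integral_varF hπ hf,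
    ← integral_const_mul]
  refine integral_mono_ae (integrable_dform_sectR hπ hinv hf)
    ((integrable_varF hπ hf).const_mul 2) ?_
  filter_upwards [ae_memLp_of_comp_eq (comp_eq_of_map_swap_compProd_eq hπ) hf] with θ hθ
  exact (hinv θ).dform_le_two_mul_varF hθ

end MetropolisWithinGibbs

section Rho

variable {π : Measure (Θ × X)} {ξ : Kernel Θ X} [IsMarkovKernel ξ]
  {Pk : Kernel (Θ × X) X} [IsMarkovKernel Pk] {f : X → ℝ}

lemma ae_varF_mul_gapR_nonneg (hξ : ξ ∘ₘ π.fst = π.snd)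
    (hinv : ∀ θ, (Pk.sectR θ).Invariant (ξ θ)) (hf : MemLp f 2 π.snd) :
    ∀ᵐ θ ∂π.fst, 0 ≤ varF (ξ θ) f * gapR (ξ θ) (fun x => Pk (θ, x)) := by
  filter_upwards [ae_memLp_of_comp_eq hξ hf] with θ hθ
  exact mul_nonneg (varF_nonneg hθ) (gapR_nonneg fun g hg => (hinv θ).dform_nonneg hg)

lemma integral_varF_mul_gapR_nonneg (hξ : ξ ∘ₘ π.fst = π.snd)
    (hinv : ∀ θ, (Pk.sectR θ).Invariant (ξ θ)) (hf : MemLp f 2 π.snd) :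
    0 ≤ ∫ θ, varF (ξ θ) f * gapR (ξ θ) (fun x => Pk (θ, x)) ∂π.fst :=
  integral_nonneg_of_ae (ae_varF_mul_gapR_nonneg hξ hinv hf)

lemma mwgRho_nonneg (hξ : ξ ∘ₘ π.fst = π.snd) (hinv : ∀ θ, (Pk.sectR θ).Invariant (ξ θ)) :
    0 ≤ mwgRho π ξ Pk := by
  refine Real.sInf_nonneg ?_
  rintro _ ⟨f, hf, hpos, rfl⟩
  exact div_nonneg (integral_varF_mul_gapR_nonneg hξ hinv hf) hpos.le

lemma mwgRho_mul_integral_varF_le (hξ : ξ ∘ₘ π.fst = π.snd)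
    (hinv : ∀ θ, (Pk.sectR θ).Invariant (ξ θ)) (hf : MemLp f 2 π.snd) :
    mwgRho π ξ Pk * ∫ θ, varF (ξ θ) f ∂π.fst
      ≤ ∫ θ, varF (ξ θ) f * gapR (ξ θ) (fun x => Pk (θ, x)) ∂π.fst := by
  have hvar : 0 ≤ ∫ θ, varF (ξ θ) f ∂π.fst := integral_nonneg_of_ae <| by
    filter_upwards [ae_memLp_of_comp_eq hξ hf] with θ hθ using varF_nonneg hθ
  rcases hvar.eq_or_lt with hvar | hvar
  · rw [← hvar, mul_zero]; exact integral_varF_mul_gapR_nonneg hξ hinv hf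
  · rw [← le_div_iff₀ hvar]
    refine csInf_le ⟨0, ?_⟩ ⟨f, hf, hvar, rfl⟩
    rintro _ ⟨g, hg, hgpos, rfl⟩
    exact div_nonneg (integral_varF_mul_gapR_nonneg hξ hinv hg) hgpos.le

lemma mwgRho_mul_dform_gammaX_le [IsProbabilityMeasure π] {η : Kernel X Θ} [IsMarkovKernel η]
    (hπ : (π.snd ⊗ₘ η).map Prod.swap = π.fst ⊗ₘ ξ)
    (hinv : ∀ θ, (Pk.sectR θ).Invariant (ξ θ)) (hf : MemLp f 2 π.snd) :
    mwgRho π ξ Pk * dform π.snd (GammaX η ξ) f ≤ dform π.snd (mwgKernel η Pk) f := by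
  have hξ := comp_eq_of_map_swap_compProd_eq hπ
  rw [dform_gammaX_eq_integral_varF hπ hf, dform_mwgKernel_eq_integral hπ hinv hf]
  refine (mwgRho_mul_integral_varF_le hξ hinv hf).trans
    (integral_mono_of_nonneg (ae_varF_mul_gapR_nonneg hξ hinv hf)
      (integrable_dform_sectR hπ hinv hf) ?_)
  filter_upwards [ae_memLp_of_comp_eq hξ hf] with θ hθ
  rw [mul_comm]
  exact gapR_mul_varF_le_dform (fun g hg => (hinv θ).dform_nonneg hg) hθ

end Rho

/-- In the Metropolis-within-Gibbs setting, for every `f ∈ L²(X, π_X)` the Dirichlet forms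
satisfy `2 E_{Γ_x}(f) ≥ E_{Φ_x}(f) ≥ ϱ E_{Γ_x}(f)` and the right spectral gaps satisfy
`2 Gap(Γ_x) ≥ Gap(Φ_x) ≥ ϱ Gap(Γ_x)`. -/
theorem mwg_dirichlet_and_gap_comparison
    (π : Measure (Θ × X)) [IsProbabilityMeasure π]
    (ξ : Kernel Θ X) [IsMarkovKernel ξ] (η : Kernel X Θ) [IsMarkovKernel η]
    (hdis₁ : π = Measure.compProd π.fst ξ)
    (hdis₂ : π = (Measure.compProd π.snd η).map Prod.swap)
    (Pk : Kernel (Θ × X) X) [IsMarkovKernel Pk]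
    (hrev : ∀ θ : Θ, ∀ A B : Set X, MeasurableSet A → MeasurableSet B →
      ∫⁻ x in A, Pk (θ, x) B ∂(ξ θ) = ∫⁻ x in B, Pk (θ, x) A ∂(ξ θ)) :
    (∀ f : X → ℝ, MemLp f 2 π.snd →
      dform π.snd (PhiX η Pk) f ≤ 2 * dform π.snd (GammaX η ξ) f ∧
      mwgRho π ξ Pk * dform π.snd (GammaX η ξ) f ≤ dform π.snd (PhiX η Pk) f) ∧
    (gapR π.snd (PhiX η Pk) ≤ 2 * gapR π.snd (GammaX η ξ) ∧
      mwgRho π ξ Pk * gapR π.snd (GammaX η ξ) ≤ gapR π.snd (PhiX η Pk)) := by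
  have hπ : (π.snd ⊗ₘ η).map Prod.swap = π.fst ⊗ₘ ξ := hdis₂.symm.trans hdis₁
  have hinv : ∀ θ, (Pk.sectR θ).Invariant (ξ θ) := fun θ =>
    Kernel.IsReversible.invariant fun A B hA hB => hrev θ A B hA hB
  have hΦ : ∀ f, MemLp f 2 π.snd → 0 ≤ dform π.snd (PhiX η Pk) f := fun f hf => by
    rw [← coe_mwgKernel]; exact (invariant_mwgKernel hπ hinv).dform_nonneg hf
  have hΓ : ∀ f, MemLp f 2 π.snd → 0 ≤ dform π.snd (GammaX η ξ) f := fun f hf => by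
    rw [← coe_mwgKernel_prodMkRight]
    exact (invariant_mwgKernel hπ invariant_sectR_prodMkRight).dform_nonneg hf
  have hdir : ∀ f, MemLp f 2 π.snd →
      dform π.snd (PhiX η Pk) f ≤ 2 * dform π.snd (GammaX η ξ) f ∧
      mwgRho π ξ Pk * dform π.snd (GammaX η ξ) f ≤ dform π.snd (PhiX η Pk) f := fun f hf => by
    rw [← coe_mwgKernel]
    exact ⟨dform_mwgKernel_le_two_mul_dform_gammaX hπ hinv hf,
      mwgRho_mul_dform_gammaX_le hπ hinv hf⟩
  have hhalf : (1 / 2 : ℝ) * gapR π.snd (PhiX η Pk) ≤ gapR π.snd (GammaX η ξ) :=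
    mul_gapR_le_gapR (by norm_num) hΦ fun f hf => by linarith [(hdir f hf).1]
  exact ⟨hdir, by linarith, mul_gapR_le_gapR
    (mwgRho_nonneg (comp_eq_of_map_swap_compProd_eq hπ) hinv) hΓ fun f hf => (hdir f hf).2⟩
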